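/- arXiv:0905.0306 — 5 statements merged into one kernel-verified Lean document; each statement's English description precedes it below -/
import Mathlib

section
/- Let X be a topological space and f : X → X a homeomorphism such that every point of X is nonwandering for f. Then for every integer n ≥ 1, every point of X is nonwandering for the n-th iterate f^n. Equivalently: if every nonempty open set U ⊆ X satisfies (f iterated k times) '' U ∩ U ≠ ∅ for some k > 0, then for every n ≥ 1 and every nonempty open set U ⊆ X there exists m > 0 with (f iterated m·n times) '' U ∩ U ≠ ∅. -/
open Set Topology

/-- A point `x` is nonwandering for `f` if every open neighborhood `U` of `x`
satisfies `f^[n] '' U ∩ U ≠ ∅` for some `n > 0`. -/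
def IsNonwanderingPt {X : Type*} [TopologicalSpace X] (f : X → X) (x : X) : Prop :=
  ∀ U : Set X, IsOpen U → x ∈ U → ∃ n : ℕ, 0 < n ∧ (f^[n] '' U ∩ U).Nonempty

/-- A point `x` is periodic for `f` if `f^[n] x = x` for some `n > 0`. -/
def IsPerPt {X : Type*} (f : X → X) (x : X) : Prop :=
  ∃ n : ℕ, 0 < n ∧ f^[n] x = x

/-- The collection of connected components of the set `E`. -/
def connComps {S : Type*} [TopologicalSpace S] (E : Set S) : Set (Set S) :=
  {C | ∃ x ∈ E, C = connectedComponentIn E x}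

/-- A set `K` is annular if it has an open neighborhood `A` homeomorphic to the
open annulus `AddCircle 1 × ℝ` such that `A \ K` has exactly two connected
components, both homeomorphic to the open annulus. -/
def IsAnnular {S : Type*} [TopologicalSpace S] (K : Set S) : Prop :=
  ∃ A : Set S, IsOpen A ∧ K ⊆ A ∧ Nonempty (A ≃ₜ (AddCircle (1 : ℝ) × ℝ)) ∧
    (connComps (A \ K)).encard = 2 ∧
    ∀ C ∈ connComps (A \ K), Nonempty (C ≃ₜ (AddCircle (1 : ℝ) × ℝ))

theorem stmt7 {X : Type*} [TopologicalSpace X] (f : X ≃ₜ X)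
    (hnw : ∀ x : X, IsNonwanderingPt (⇑f) x) :
    ∀ n : ℕ, 1 ≤ n → ∀ x : X, IsNonwanderingPt ((⇑f)^[n]) x := by
  intro n hn x U hU hxU
  have hUne : U.Nonempty := ⟨x, hxU⟩
  have hopen : ∀ k : ℕ, IsOpenMap ((⇑f)^[k]) := by
    intro k
    induction k with
    | zero => simpa using IsOpenMap.id
    | succ k ih => rw [Function.iterate_succ']; exact f.isOpenMap.comp ih
  have key : ∀ j : ℕ, ∃ (V : Set X) (s : ℕ → ℕ), IsOpen V ∧ V.Nonempty ∧ s 0 = 0 ∧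
      (∀ i, i < j → s i < s (i + 1)) ∧ (∀ i, i ≤ j → V ⊆ (⇑f)^[s j - s i] '' U) ∧
      (∀ i i', i ≤ i' → i' ≤ j → ((⇑f)^[s i' - s i] '' U ∩ U).Nonempty) := by
    intro j
    induction j with
    | zero =>
      refine ⟨U, fun _ => 0, hU, hUne, rfl, by omega, ?_, ?_⟩
      · intro i _; simp
      · intro i i' _ _; simpa using hUne
    | succ j ih =>
      obtain ⟨V, s, hVo, hVne, hs0, hmono, hsub, hpair⟩ := ih
      obtain ⟨y, hyV⟩ := hVne
      obtain ⟨k, hk, hnew⟩ := hnw y V hVo hyV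
      have hsmono : ∀ a b : ℕ, a ≤ b → b ≤ j → s a ≤ s b := by
        intro a b hab hbj
        induction b with
        | zero =>
          have : a = 0 := Nat.le_zero.mp hab
          simp [this]
        | succ b ihb =>
          rcases Nat.lt_or_ge a (b + 1) with h | h
          · have h1 : s a ≤ s b := ihb (by omega) (by omega)
            have h2 : s b < s (b + 1) := hmono b (by omega)
            omega
          · have : a = b + 1 := by omega
            simp [this]
      have hVU : V ⊆ U := by simpa using hsub j le_rfl
      have himg : ∀ i : ℕ, i ≤ j → (⇑f)^[k] '' V ∩ V ⊆ (⇑f)^[s j + k - s i] '' U := by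
        intro i hij z hz
        have hsi : s i ≤ s j := hsmono i j hij le_rfl
        have harith : s j + k - s i = k + (s j - s i) := by omega
        obtain ⟨w, hwV, hwz⟩ := hz.1
        obtain ⟨u, huU, huw⟩ := hsub i hij hwV
        refine ⟨u, huU, ?_⟩
        rw [harith, Function.iterate_add_apply, huw, hwz]
      refine ⟨(⇑f)^[k] '' V ∩ V, fun t => if t ≤ j then s t else s j + k,
        (hopen k V hVo).inter hVo, hnew, by simp [hs0], ?_, ?_, ?_⟩
      · intro i hi
        rcases Nat.lt_or_ge i j with h | h
        · simp only [if_pos (by omega : i ≤ j), if_pos (by omega : i + 1 ≤ j)]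
          exact hmono i h
        · have : i = j := by omega
          subst this
          simp only [if_pos le_rfl, if_neg (by omega : ¬ i + 1 ≤ i)]
          omega
      · intro i hi
        simp only [if_neg (by omega : ¬ j + 1 ≤ j)]
        rcases Nat.lt_or_ge i (j + 1) with h | h
        · have hij : i ≤ j := by omega
          simp only [if_pos hij]
          exact himg i hij
        · have : i = j + 1 := by omega
          subst this
          simp only [if_neg (by omega : ¬ j + 1 ≤ j), Nat.sub_self,
            Function.iterate_zero, Set.image_id]
          exact fun z hz => hVU hz.2
      · intro i i' hii hi'
        rcases Nat.lt_or_ge i' (j + 1) with h | h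
        · have hi'j : i' ≤ j := by omega
          simp only [if_pos hi'j, if_pos (le_trans hii hi'j)]
          exact hpair i i' hii hi'j
        · have hi'eq : i' = j + 1 := by omega
          subst hi'eq
          rcases Nat.lt_or_ge i (j + 1) with h2 | h2
          · have hij : i ≤ j := by omega
            simp only [if_pos hij, if_neg (by omega : ¬ j + 1 ≤ j)]
            obtain ⟨z, hz⟩ := hnew
            exact ⟨z, himg i hij hz, hVU hz.2⟩
          · have : i = j + 1 := by omega
            subst this
            simpa using hUne
  obtain ⟨V, s, _, _, _, hmono, _, hpair⟩ := key n
  have hmodlt : ∀ i : Fin (n + 1), s i.val % n < n := fun i => Nat.mod_lt _ (by omega)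
  obtain ⟨a, b, hab, heq⟩ := Fintype.exists_ne_map_eq_of_card_lt
    (fun i : Fin (n + 1) => (⟨s i.val % n, hmodlt i⟩ : Fin n)) (by simp)
  have heq' : s a.val % n = s b.val % n := by
    simpa using congrArg Fin.val heq
  have hsmono : ∀ p q : ℕ, p < q → q ≤ n → s p < s q := by
    intro p q hpq hqn
    induction q with
    | zero => omega
    | succ q ihq =>
      rcases Nat.lt_or_ge p q with h | h
      · have h1 : s p < s q := ihq h (by omega)
        have h2 : s q < s (q + 1) := hmono q (by omega)
        omega
      · have : p = q := by omega
        subst this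
        exact hmono p (by omega)
  have main : ∀ p q : ℕ, p < q → q ≤ n → s p % n = s q % n →
      ∃ m : ℕ, 0 < m ∧ (((⇑f)^[n])^[m] '' U ∩ U).Nonempty := by
    intro p q hpq hqn hmod
    have hlt : s p < s q := hsmono p q hpq hqn
    have hdvd : n ∣ s q - s p := (Nat.modEq_iff_dvd' hlt.le).mp hmod
    obtain ⟨m, hm⟩ := hdvd
    have hm0 : 0 < m := by
      rcases Nat.eq_zero_or_pos m with h | h
      · subst h; omega
      · exact h
    refine ⟨m, hm0, ?_⟩
    have hiter : ((⇑f)^[n])^[m] = (⇑f)^[s q - s p] := by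
      rw [hm, ← Function.iterate_mul]
    rw [hiter]
    exact hpair p q hpq.le hqn
  have habv : a.val ≠ b.val := fun h => hab (Fin.ext h)
  have ha := a.isLt
  have hb := b.isLt
  rcases Nat.lt_or_ge a.val b.val with h | h
  · exact main a.val b.val h (by omega) heq'
  · exact main b.val a.val (by omega) (by omega) heq'.symm
end

section
/- Let X be a topological space and f : X → X a homeomorphism such that every point of X is nonwandering for f. Let 𝒰 be a family of pairwise disjoint nonempty open subsets of X which is permuted by f, i.e. for every U ∈ 𝒰 the image f '' U again belongs to 𝒰. Then every U ∈ 𝒰 is periodic under f: there exists an integer n > 0 with (f iterated n times) '' U = U. -/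
open Set Topology

theorem stmt8 {X : Type*} [TopologicalSpace X] (f : X ≃ₜ X)
    (hnw : ∀ x : X, IsNonwanderingPt (⇑f) x)
    (𝒰 : Set (Set X)) (hdisj : 𝒰.Pairwise Disjoint)
    (hne : ∀ U ∈ 𝒰, U.Nonempty) (hopen : ∀ U ∈ 𝒰, IsOpen U)
    (hperm : ∀ U ∈ 𝒰, ⇑f '' U ∈ 𝒰) :
    ∀ U ∈ 𝒰, ∃ n : ℕ, 0 < n ∧ (⇑f)^[n] '' U = U := by
  intro U hU
  have hiter : ∀ n : ℕ, (⇑f)^[n] '' U ∈ 𝒰 := by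
    intro n
    induction n with
    | zero => simpa using hU
    | succ n ih =>
      have := hperm _ ih
      rwa [← Set.image_comp, ← Function.iterate_succ'] at this
  obtain ⟨x, hx⟩ := hne U hU
  obtain ⟨n, hn, hnon⟩ := hnw x U (hopen U hU) hx
  refine ⟨n, hn, ?_⟩
  by_contra hne'
  exact Set.not_nonempty_empty
    (Set.disjoint_iff_inter_eq_empty.mp (hdisj (hiter n) hU hne') ▸ hnon)
end

section
/- Let S be a closed surface and f : S → S a homeomorphism such that every point of S is nonwandering for f. Let K ⊆ S be a compact set with f(K) = K. Then every connected component U of S ∖ K is periodic under f: there exists an integer n > 0 with (f iterated n times) '' U = U. -/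
open Set Topology

/-!
A surface is locally connected, so a component `U` of the open set `Kᶜ` is open, and
nonwandering yields `n > 0` with `f^[n] '' U ∩ U` nonempty. Since `f^[n]` is a homeomorphism
preserving `Kᶜ`, it maps `U` onto a component of `Kᶜ`, which must then be `U` itself.
-/

theorem locallyConnectedSpace_of_forall_isOpen {X : Type*} [TopologicalSpace X]
    (h : ∀ x : X, ∃ U : Set X, IsOpen U ∧ x ∈ U ∧ LocallyConnectedSpace U) :
    LocallyConnectedSpace X := by
  refine locallyConnectedSpace_iff_connected_subsets.2 fun x V hV ↦ ?_
  obtain ⟨U, hU, hxU, _⟩ := h x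
  have hV' : Subtype.val ⁻¹' V ∈ 𝓝 (⟨x, hxU⟩ : U) := continuous_subtype_val.continuousAt hV
  obtain ⟨W, hW, hWconn, hWV⟩ := locallyConnectedSpace_iff_connected_subsets.1 ‹_› _ _ hV'
  exact ⟨Subtype.val '' W, hU.isOpenMap_subtype_val.image_mem_nhds hW,
    hWconn.image _ continuous_subtype_val.continuousOn,
    (image_mono hWV).trans (image_preimage_subset _ _)⟩

theorem Homeomorph.coe_pow {X : Type*} [TopologicalSpace X] (f : X ≃ₜ X) (n : ℕ) :
    ⇑(f ^ n) = (⇑f)^[n] :=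
  hom_coe_pow _ rfl (fun _ _ ↦ rfl) f n

theorem Homeomorph.image_connectedComponentIn_eq_of_nonempty_inter {X : Type*}
    [TopologicalSpace X] (g : X ≃ₜ X) {A : Set X} (hA : g '' A = A) {x : X} (hx : x ∈ A)
    (hmeet : (g '' connectedComponentIn A x ∩ connectedComponentIn A x).Nonempty) :
    g '' connectedComponentIn A x = connectedComponentIn A x := by
  rw [g.image_connectedComponentIn hx, hA] at hmeet ⊢
  obtain ⟨y, hy, hy'⟩ := hmeet
  exact (connectedComponentIn_eq hy).trans (connectedComponentIn_eq hy').symm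

theorem stmt9_general {S : Type*} [TopologicalSpace S] [T2Space S]
    (hsurf : ∀ x : S, ∃ U : Set S, IsOpen U ∧ x ∈ U ∧ Nonempty (U ≃ₜ (ℝ × ℝ)))
    (f : S ≃ₜ S) (hnw : ∀ x : S, IsNonwanderingPt (⇑f) x)
    (K : Set S) (hKcpt : IsCompact K) (hKinv : ⇑f '' K = K) :
    ∀ U ∈ connComps Kᶜ, ∃ n : ℕ, 0 < n ∧ (⇑f)^[n] '' U = U := by
  have : LocallyConnectedSpace S := locallyConnectedSpace_of_forall_isOpen fun x ↦
    (hsurf x).imp fun _ ⟨hU, hxU, ⟨e⟩⟩ ↦ ⟨hU, hxU, e.locallyConnectedSpace⟩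
  rintro U ⟨x, hx, rfl⟩
  have hcompl : ⇑f '' Kᶜ = Kᶜ := by rw [image_compl_eq f.bijective, hKinv]
  obtain ⟨n, hn, hmeet⟩ :=
    hnw x _ hKcpt.isClosed.isOpen_compl.connectedComponentIn (mem_connectedComponentIn hx)
  refine ⟨n, hn, ?_⟩
  rw [← f.coe_pow] at hmeet ⊢
  refine (f ^ n).image_connectedComponentIn_eq_of_nonempty_inter ?_ hx hmeet
  rw [f.coe_pow]
  exact Function.IsFixedPt.image_iterate hcompl n

theorem stmt9 {S : Type*} [TopologicalSpace S] [CompactSpace S] [T2Space S]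
    [SecondCountableTopology S] [Nonempty S]
    (hsurf : ∀ x : S, ∃ U : Set S, IsOpen U ∧ x ∈ U ∧ Nonempty (U ≃ₜ (ℝ × ℝ)))
    (f : S ≃ₜ S) (hnw : ∀ x : S, IsNonwanderingPt (⇑f) x)
    (K : Set S) (hKcpt : IsCompact K) (hKinv : ⇑f '' K = K) :
    ∀ U ∈ connComps Kᶜ, ∃ n : ℕ, 0 < n ∧ (⇑f)^[n] '' U = U :=
  stmt9_general hsurf f hnw K hKcpt hKinv
end

section
/- For every matrix A in the special linear group SL(2, ℤ) (2×2 integer matrices of determinant 1) there exists an integer n > 0 such that the trace of A^n is at least 2; equivalently, 2 − tr(A^n) ≤ 0. -/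
theorem stmt10 (A : Matrix.SpecialLinearGroup (Fin 2) ℤ) :
    ∃ n : ℕ, 0 < n ∧ 2 ≤ Matrix.trace ((A ^ n : Matrix.SpecialLinearGroup (Fin 2) ℤ) :
      Matrix (Fin 2) (Fin 2) ℤ) := by
  set M : Matrix (Fin 2) (Fin 2) ℤ := (A : Matrix (Fin 2) (Fin 2) ℤ) with hM
  have hdet : M.det = 1 := A.2
  have hd : M 0 0 * M 1 1 - M 0 1 * M 1 0 = 1 := by
    simpa [Matrix.det_fin_two] using hdet
  set t : ℤ := M.trace with ht
  have htr : t = M 0 0 + M 1 1 := by rw [ht, Matrix.trace_fin_two]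
  have key : M ^ 2 = t • M - 1 := by
    rw [htr]
    ext i j
    fin_cases i <;> fin_cases j <;>
      simp only [Fin.zero_eta, Fin.mk_one, pow_two, Matrix.mul_apply, Fin.sum_univ_two,
        Matrix.sub_apply, Matrix.smul_apply, Matrix.one_apply, smul_eq_mul, Fin.isValue] <;>
      norm_num <;> nlinarith [hd]
  have hcoe : ∀ n : ℕ, ((A ^ n : Matrix.SpecialLinearGroup (Fin 2) ℤ) :
      Matrix (Fin 2) (Fin 2) ℤ) = M ^ n := by
    intro n
    rw [hM, Matrix.SpecialLinearGroup.coe_pow]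
  have htr2 : Matrix.trace (M ^ 2) = t * t - 2 := by
    rw [key, Matrix.trace_sub, Matrix.trace_smul, Matrix.trace_one, ← ht]
    simp [smul_eq_mul]
  rcases le_or_gt 2 t with h2 | h2
  · exact ⟨1, one_pos, by simpa [hcoe 1, pow_one] using h2⟩
  rcases le_or_gt t (-2) with hm2 | hm2
  · refine ⟨2, by norm_num, ?_⟩
    rw [hcoe 2, htr2]
    nlinarith
  -- now -1 ≤ t ≤ 1
  have htri : t = -1 ∨ t = 0 ∨ t = 1 := by omega
  rcases htri with h | h | h
  · -- t = -1 : M^3 = 1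
    have h3 : M ^ 3 = 1 := by
      have e1 : M ^ 3 = M ^ 2 * M := by rw [pow_succ]
      rw [e1, key, h]
      have : ((-1 : ℤ) • M - 1) * M = -(M * M) - M := by
        rw [sub_mul, one_mul, neg_smul, one_smul, neg_mul]
      rw [this, ← pow_two, key, h]
      simp
    refine ⟨3, by norm_num, ?_⟩
    rw [hcoe 3, h3, Matrix.trace_one]
    norm_num
  · -- t = 0 : M^2 = -1, M^4 = 1
    have h2' : M ^ 2 = -1 := by rw [key, h]; simp
    have h4 : M ^ 4 = 1 := by
      have : M ^ 4 = (M ^ 2) ^ 2 := by rw [← pow_mul]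
      rw [this, h2', neg_one_sq]
    refine ⟨4, by norm_num, ?_⟩
    rw [hcoe 4, h4, Matrix.trace_one]
    norm_num
  · -- t = 1 : M^3 = -1, M^6 = 1
    have h3 : M ^ 3 = -1 := by
      have e1 : M ^ 3 = M ^ 2 * M := by rw [pow_succ]
      rw [e1, key, h]
      have : ((1 : ℤ) • M - 1) * M = M * M - M := by
        rw [sub_mul, one_mul, one_smul]
      rw [this, ← pow_two, key, h]
      simp
    have h6 : M ^ 6 = 1 := by
      have : M ^ 6 = (M ^ 3) ^ 2 := by rw [← pow_mul]
      rw [this, h3, neg_one_sq]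
    refine ⟨6, by norm_num, ?_⟩
    rw [hcoe 6, h6, Matrix.trace_one]
    norm_num
end

section
/- Let X̂ and X be topological spaces with X̂ connected, and let π : X̂ → X be a covering map such that every fiber π⁻¹(x) has exactly two elements (a double covering). Let f : X → X and f̂ : X̂ → X̂ be homeomorphisms with π ∘ f̂ = f ∘ π (f̂ is a lift of f). If every point of X is nonwandering for f, then every point of X̂ is nonwandering for f̂. -/
open Set Topology

/-! Over an evenly covered neighbourhood of `π x` the preimage consists of two sheets, `U ∋ x`
and `U'`. Nonwandering of `f` sends some `u ∈ U`, after `n₁` steps, over `π '' U`, hence into `U`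
or `U'`. In the second case apply nonwandering again, to the open set `V ⊆ U` of points that
`f̂^[n₁]` sends into `U'`: some `v ∈ V` lands after `n₂` steps over a point `v' ∈ V`. If
`f̂^[n₂] v ∈ U'` then it differs from `v'`, so by injectivity of `f̂` the points `f̂^[n₁ + n₂] v`
and `f̂^[n₁] v' ∈ U'` are distinct points of one fibre, and the former lies in `U`. -/

open Function

namespace Bundle.Trivialization

variable {E B F : Type*} [TopologicalSpace E] [TopologicalSpace B] [TopologicalSpace F]
  {p : E → B} (t : Trivialization F p)

def sheet (k : F) : Set E := t.source ∩ (fun z => (t z).2) ⁻¹' {k}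

theorem isOpen_sheet [DiscreteTopology F] (k : F) : IsOpen (t.sheet k) :=
  (continuous_snd.comp_continuousOn t.continuousOn_toFun).isOpen_inter_preimage t.open_source
    (isOpen_discrete {k})

theorem injOn_sheet (k : F) : InjOn p (t.sheet k) := by
  intro z hz z' hz' hzz'
  exact t.injOn hz.1 hz'.1 <| Prod.ext
    ((t.coe_fst hz.1).trans (hzz'.trans (t.coe_fst hz'.1).symm)) (hz.2.trans hz'.2.symm)

theorem image_sheet (k : F) : p '' t.sheet k = t.baseSet := by
  refine Subset.antisymm (image_subset_iff.mpr fun z hz => t.mem_source.mp hz.1) fun b hb => ?_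
  have hbk : (b, k) ∈ t.target := t.mem_target.mpr hb
  exact ⟨t.toOpenPartialHomeomorph.symm (b, k),
    ⟨t.map_target hbk, congrArg Prod.snd (t.apply_symm_apply hbk)⟩, t.proj_symm_apply' hb⟩

theorem mem_sheet_apply {z : E} (hz : p z ∈ t.baseSet) : z ∈ t.sheet (t z).2 :=
  ⟨t.mem_source.mpr hz, rfl⟩

theorem disjoint_sheet {k l : F} (hkl : k ≠ l) : Disjoint (t.sheet k) (t.sheet l) :=
  disjoint_left.mpr fun _ hk hl => hkl (hk.2.symm.trans hl.2)

end Bundle.Trivialization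

structure IsTwoSheeted {E B : Type*} [TopologicalSpace E] (π : E → B) (U U' : Set E) : Prop where
  isOpen_left : IsOpen U
  isOpen_right : IsOpen U'
  disjoint : Disjoint U U'
  injOn_left : InjOn π U
  injOn_right : InjOn π U'
  image_right : π '' U' = π '' U
  preimage_image_subset : π ⁻¹' (π '' U) ⊆ U ∪ U'

section

variable {E B : Type*} [TopologicalSpace E] [TopologicalSpace B] {π : E → B} {U U' : Set E}

theorem IsTwoSheeted.inter_preimage (h : IsTwoSheeted π U U') (hπ : Continuous π) {W : Set B}
    (hW : IsOpen W) : IsTwoSheeted π (U ∩ π ⁻¹' W) (U' ∩ π ⁻¹' W) where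
  isOpen_left := h.isOpen_left.inter (hW.preimage hπ)
  isOpen_right := h.isOpen_right.inter (hW.preimage hπ)
  disjoint := h.disjoint.mono inter_subset_left inter_subset_left
  injOn_left := h.injOn_left.mono inter_subset_left
  injOn_right := h.injOn_right.mono inter_subset_left
  image_right := by rw [image_inter_preimage, image_inter_preimage, h.image_right]
  preimage_image_subset := by
    rw [image_inter_preimage, preimage_inter, ← union_inter_distrib_right]
    exact inter_subset_inter_left _ h.preimage_image_subset

theorem IsCoveringMap.exists_isTwoSheeted (hπ : IsCoveringMap π) {x : E}
    (hfib : (π ⁻¹' {π x}).encard = 2) : ∃ U U', x ∈ U ∧ IsTwoSheeted π U U' := by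
  obtain ⟨x', hx'⟩ : ∃ x', π ⁻¹' {π x} \ {x} = {x'} := by
    rw [← encard_eq_one, encard_sdiff_singleton_of_mem (show x ∈ π ⁻¹' {π x} from rfl), hfib]
    rfl
  have hx'_mem : x' ∈ π ⁻¹' {π x} \ {x} := hx' ▸ mem_singleton x'
  have hfiber : ∀ z ∈ π ⁻¹' {π x}, z = x ∨ z = x' := fun z hz =>
    or_iff_not_imp_left.mpr fun hzx => eq_of_mem_singleton (hx' ▸ ⟨hz, hzx⟩)
  have := (hπ (π x)).1
  have : Nonempty (π ⁻¹' {π x}) := ⟨⟨x, rfl⟩⟩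
  let t := (hπ (π x)).toTrivialization
  let i : π ⁻¹' {π x} := ⟨x, rfl⟩
  let j : π ⁻¹' {π x} := ⟨x', hx'_mem.1⟩
  have hij : i ≠ j := fun h => hx'_mem.2 (congrArg Subtype.val h).symm
  have hx : x ∈ t.sheet i := by
    have := t.mem_sheet_apply (hπ (π x)).mem_toTrivialization_baseSet
    rwa [(hπ (π x)).toTrivialization_apply] at this
  refine ⟨t.sheet i, t.sheet j, hx, t.isOpen_sheet i, t.isOpen_sheet j, t.disjoint_sheet hij,
    t.injOn_sheet i, t.injOn_sheet j, by rw [t.image_sheet, t.image_sheet], ?_⟩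
  rw [t.image_sheet]
  intro z hz
  have hz_sheet := t.mem_sheet_apply hz
  rcases hfiber _ (t z).2.2 with h | h
  · exact .inl ((Subtype.ext h : (t z).2 = i) ▸ hz_sheet)
  · exact .inr ((Subtype.ext h : (t z).2 = j) ▸ hz_sheet)

theorem IsCoveringMap.exists_isTwoSheeted_subset (hπ : IsCoveringMap π) {x : E}
    (hfib : (π ⁻¹' {π x}).encard = 2) {U₀ : Set E} (hU₀ : U₀ ∈ 𝓝 x) :
    ∃ U U', x ∈ U ∧ U ⊆ U₀ ∧ IsTwoSheeted π U U' := by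
  obtain ⟨U, U', hxU, h⟩ := hπ.exists_isTwoSheeted hfib
  obtain ⟨V, hVU₀, hV, hxV⟩ := mem_nhds_iff.mp hU₀
  refine ⟨U ∩ π ⁻¹' (π '' (U ∩ V)), U' ∩ π ⁻¹' (π '' (U ∩ V)), ⟨hxU, x, ⟨hxU, hxV⟩, rfl⟩, ?_,
    h.inter_preimage hπ.continuous (hπ.isOpenMap _ (h.isOpen_left.inter hV))⟩
  rintro z ⟨hzU, w, hw, hwz⟩
  exact hVU₀ (h.injOn_left hw.1 hzU hwz ▸ hw.2)

theorem IsNonwanderingPt.exists_proj_iterate_eq {g : E → E} {f : B → B} (hπ : IsOpenMap π)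
    (hsc : Semiconj π g f) {V : Set E} (hV : IsOpen V) {z : E} (hz : z ∈ V)
    (hnw : IsNonwanderingPt f (π z)) :
    ∃ n, 0 < n ∧ ∃ v ∈ V, ∃ v' ∈ V, π (g^[n] v) = π v' := by
  obtain ⟨n, hn, _, ⟨_, ⟨v, hv, rfl⟩, rfl⟩, v', hv', hvv'⟩ := hnw _ (hπ V hV) ⟨z, hz, rfl⟩
  exact ⟨n, hn, v, hv, v', hv', (hsc.iterate_right n v).trans hvv'.symm⟩

theorem IsTwoSheeted.exists_iterate_image_inter_nonempty (h : IsTwoSheeted π U U')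
    (hπ : IsOpenMap π) {g : E → E} (hg : Continuous g) (hg_inj : Injective g) {f : B → B}
    (hsc : Semiconj π g f) (hnw : ∀ y, IsNonwanderingPt f y) {x : E} (hx : x ∈ U) :
    ∃ n, 0 < n ∧ (g^[n] '' U ∩ U).Nonempty := by
  have returns {n : ℕ} (hn : 0 < n) {u : E} (hu : u ∈ U) (hnu : g^[n] u ∈ U) :
      ∃ n, 0 < n ∧ (g^[n] '' U ∩ U).Nonempty :=
    ⟨n, hn, _, mem_image_of_mem _ hu, hnu⟩
  have mem_or_mem {z w : E} (hzw : π z = π w) (hw : w ∈ U) : z ∈ U ∨ z ∈ U' :=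
    h.preimage_image_subset ⟨w, hw, hzw.symm⟩
  obtain ⟨n₁, hn₁, u, hu, u', hu', hproj₁⟩ :=
    (hnw _).exists_proj_iterate_eq hπ hsc h.isOpen_left hx
  rcases mem_or_mem hproj₁ hu' with h₁ | h₁
  · exact returns hn₁ hu h₁
  obtain ⟨n₂, hn₂, v, ⟨hv, -⟩, v', ⟨hv', hv'₁⟩, hproj₂⟩ :=
    (hnw _).exists_proj_iterate_eq hπ hsc
      (h.isOpen_left.inter (h.isOpen_right.preimage (hg.iterate n₁))) ⟨hu, h₁⟩
  rcases mem_or_mem hproj₂ hv' with h₂ | h₂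
  · exact returns hn₂ hv h₂
  have hproj₃ : π (g^[n₁ + n₂] v) = π (g^[n₁] v') := by
    rw [iterate_add_apply, hsc.iterate_right n₁, hsc.iterate_right n₁, hproj₂]
  obtain ⟨w, hw, hw_proj⟩ : π (g^[n₁] v') ∈ π '' U := h.image_right ▸ mem_image_of_mem π hv'₁
  rcases mem_or_mem (hproj₃.trans hw_proj.symm) hw with h₃ | h₃
  · exact returns (by omega) hv h₃
  have hv'_eq : g^[n₂] v = v' := by
    refine hg_inj.iterate n₁ ?_
    rw [← iterate_add_apply]
    exact h.injOn_right h₃ hv'₁ hproj₃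
  exact absurd hv' (disjoint_right.mp h.disjoint (hv'_eq ▸ h₂))

end

theorem stmt12_general {Xh X : Type*} [TopologicalSpace Xh] [TopologicalSpace X]
    (π : Xh → X) (hcov : IsCoveringMap π)
    (hfib : ∀ x : X, (π ⁻¹' {x}).encard = 2)
    (f : X ≃ₜ X) (fh : Xh ≃ₜ Xh) (hlift : π ∘ ⇑fh = ⇑f ∘ π)
    (hnw : ∀ x : X, IsNonwanderingPt (⇑f) x) :
    ∀ x : Xh, IsNonwanderingPt (⇑fh) x := by
  intro x U₀ hU₀ hxU₀
  obtain ⟨U, U', hxU, hUU₀, hsheets⟩ :=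
    hcov.exists_isTwoSheeted_subset (hfib (π x)) (hU₀.mem_nhds hxU₀)
  obtain ⟨n, hn, hreturn⟩ := hsheets.exists_iterate_image_inter_nonempty hcov.isOpenMap
    fh.continuous fh.injective (congrFun hlift) hnw hxU
  exact ⟨n, hn, hreturn.mono (inter_subset_inter (image_mono hUU₀) hUU₀)⟩

theorem stmt12 {Xh X : Type*} [TopologicalSpace Xh] [TopologicalSpace X]
    [ConnectedSpace Xh] (π : Xh → X) (hcov : IsCoveringMap π)
    (hfib : ∀ x : X, (π ⁻¹' {x}).encard = 2)
    (f : X ≃ₜ X) (fh : Xh ≃ₜ Xh) (hlift : π ∘ ⇑fh = ⇑f ∘ π)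
    (hnw : ∀ x : X, IsNonwanderingPt (⇑f) x) :
    ∀ x : Xh, IsNonwanderingPt (⇑fh) x :=
  stmt12_general π hcov hfib f fh hlift hnw
end
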